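/- Let G be a Klee-graph on at least 8 vertices having exactly two triangles (which are necessarily vertex-disjoint). Then exactly one edge of each triangle lies on a 4-cycle of G. -/

import Mathlib

open SimpleGraph
open scoped Classical

/-- `H` is obtained from `G` by expanding the vertex `v` into a triangle. -/
def IsTriangleExpansion {V W : Type} (G : SimpleGraph V) (H : SimpleGraph W) : Prop :=
  ∃ (v : V) (t : Fin 3 → W) (g : {u : V // u ≠ v} → W) (σ : Fin 3 → {u : V // u ≠ v}),
    Function.Injective t ∧ Function.Injective g ∧
    (Set.range t ∩ Set.range g = ∅) ∧ (Set.range t ∪ Set.range g = Set.univ) ∧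
    Function.Injective σ ∧ (∀ i, G.Adj v (σ i).1) ∧
    (∀ u : {u : V // u ≠ v}, G.Adj v u.1 → u ∈ Set.range σ) ∧
    (∀ i j, H.Adj (t i) (t j) ↔ i ≠ j) ∧
    (∀ a b : {u : V // u ≠ v}, H.Adj (g a) (g b) ↔ G.Adj a.1 b.1) ∧
    (∀ i a, H.Adj (t i) (g a) ↔ a = σ i)

/-- Klee-graphs: `K₄` is Klee, and any triangle expansion of a Klee-graph is Klee. -/
inductive IsKlee : ∀ {V : Type}, SimpleGraph V → Prop
  | base {V : Type} (G : SimpleGraph V) (e : V ≃ Fin 4)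
      (h : ∀ a b : V, G.Adj a b ↔ a ≠ b) : IsKlee G
  | expand {V W : Type} (G : SimpleGraph V) (H : SimpleGraph W)
      (hG : IsKlee G) (h : IsTriangleExpansion G H) : IsKlee H

/-- A perfect matching given as a set of edges. -/
def IsPerfectMatchingSet {V : Type} (G : SimpleGraph V) (M : Set (Sym2 V)) : Prop :=
  M ⊆ G.edgeSet ∧ ∀ v : V, ∃! e : Sym2 V, e ∈ M ∧ v ∈ e

/-- A cubic (3-regular) graph. -/
def IsCubic {V : Type} (G : SimpleGraph V) : Prop :=
  ∀ v : V, (G.neighborSet v).ncard = 3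

/-- A circuit: a connected 2-regular subgraph. -/
def IsCircuitSub {V : Type} {G : SimpleGraph V} (C : G.Subgraph) : Prop :=
  C.coe.Connected ∧ ∀ v ∈ C.verts, (C.neighborSet v).ncard = 2

/-- A collection of pairwise vertex-disjoint circuits. -/
def IsDisjointCircuitCollection {V : Type} (G : SimpleGraph V) (𝒞 : Set G.Subgraph) : Prop :=
  (∀ C ∈ 𝒞, IsCircuitSub C) ∧ 𝒞.Pairwise fun C D => Disjoint C.verts D.verts

/-- The edge cut determined by a vertex set `A`. -/
def cutEdges {V : Type} (G : SimpleGraph V) (A : Set V) : Set (Sym2 V) :=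
  {e | e ∈ G.edgeSet ∧ ∃ a b : V, e = s(a, b) ∧ a ∈ A ∧ b ∉ A}

/-- `G` is cyclically `k`-edge-connected: every cyclic edge-cut has at least `k` edges. -/
def IsCyclicallyEdgeConnected {V : Type} (G : SimpleGraph V) (k : ℕ) : Prop :=
  ∀ A : Set V, ¬(G.induce A).IsAcyclic → ¬(G.induce Aᶜ).IsAcyclic →
    k ≤ (cutEdges G A).ncard

/-- A triangle of `G`, as a vertex set. -/
def IsTriangleSet {V : Type} (G : SimpleGraph V) (T : Set V) : Prop :=
  ∃ a b c : V, T = {a, b, c} ∧ G.Adj a b ∧ G.Adj a c ∧ G.Adj b c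

/-- An edge lying on a cycle of length `n`. -/
def LiesOnCycleOfLength {V : Type} [DecidableEq V] (G : SimpleGraph V) (e : Sym2 V) (n : ℕ) : Prop :=
  ∃ (a : V) (w : G.Walk a a), w.IsCycle ∧ w.length = n ∧ e ∈ w.edges

/-- The complement of `M` in `G` is a Hamiltonian cycle. -/
def ComplementIsHamCycle {V : Type} [DecidableEq V] (G : SimpleGraph V) (M : Set (Sym2 V)) : Prop :=
  ∃ (a : V) (w : G.Walk a a), w.IsHamiltonianCycle ∧ {e | e ∈ w.edges} = G.edgeSet \ M

/-- A `1⁺`-factor: a spanning set of edges with all degrees at least one. -/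
def Is1PlusFactor {V : Type} (G : SimpleGraph V) (F : Set (Sym2 V)) : Prop :=
  F ⊆ G.edgeSet ∧ ∀ v : V, ∃ e ∈ F, v ∈ e

/-- The Klee ladder `KL_{2k+2}`: the grid `P₂ □ P_k` together with two adjacent
vertices `inr 0` and `inr 1` joined to the first and last rung, respectively. -/
def kleeLadder (k : ℕ) : SimpleGraph ((Fin 2 × Fin k) ⊕ Fin 2) :=
  SimpleGraph.fromRel fun a b =>
    (∃ i j j', a = .inl (i, j) ∧ b = .inl (i, j') ∧ (j' : ℕ) = (j : ℕ) + 1) ∨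
    (∃ i i' j, a = .inl (i, j) ∧ b = .inl (i', j) ∧ i ≠ i') ∨
    (∃ i j, a = .inr 0 ∧ b = .inl (i, j) ∧ (j : ℕ) = 0) ∨
    (∃ i j, a = .inr 1 ∧ b = .inl (i, j) ∧ (j : ℕ) = k - 1) ∨
    (a = .inr 0 ∧ b = .inr 1)

/-- The ladder (`k`-sided prism) `L_{2k} = C_k □ K₂`. -/
def ladder (k : ℕ) : SimpleGraph (Fin 2 × ZMod k) :=
  SimpleGraph.fromRel fun a b => (a.1 = b.1 ∧ b.2 = a.2 + 1) ∨ (a.2 = b.2 ∧ a.1 ≠ b.1)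

/-- The Möbius ladder `ML_{2k}`: a `2k`-cycle plus all antipodal chords. -/
def mobiusLadder (k : ℕ) : SimpleGraph (ZMod (2 * k)) :=
  SimpleGraph.fromRel fun a b => b = a + 1 ∨ b = a + (k : ZMod (2 * k))

/-- The quasi-ladder `QL_{2m+4}`: the grid `P₂ □ P_m` together with a 4-cycle
on four new vertices `inr (i, 0)` (joined to the first rung) and
`inr (i, 1)` (joined to the last rung). -/
def quasiLadder (m : ℕ) : SimpleGraph ((Fin 2 × Fin m) ⊕ (Fin 2 × Fin 2)) :=
  SimpleGraph.fromRel fun a b =>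
    (∃ i j j', a = .inl (i, j) ∧ b = .inl (i, j') ∧ (j' : ℕ) = (j : ℕ) + 1) ∨
    (∃ i i' j, a = .inl (i, j) ∧ b = .inl (i', j) ∧ i ≠ i') ∨
    (∃ i i', a = .inr (i, 0) ∧ b = .inr (i', 1)) ∨
    (∃ i j, a = .inr (i, 0) ∧ b = .inl (i, j) ∧ (j : ℕ) = 0) ∨
    (∃ i j, a = .inr (i, 1) ∧ b = .inl (i, j) ∧ (j : ℕ) = m - 1)

/-- The graph obtained from `G` by deleting the endvertices `u, v` of an edge and
adding the edges `αβ` and `γδ`. -/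
def reducedGraph {V : Type} (G : SimpleGraph V) (u v α β γ δ : V) :
    SimpleGraph {x : V // x ≠ u ∧ x ≠ v} :=
  SimpleGraph.fromRel fun a b =>
    G.Adj a.1 b.1 ∨ (a.1 = α ∧ b.1 = β) ∨ (a.1 = γ ∧ b.1 = δ)

/-- The cyclic edge-connectivity of `G`. -/
noncomputable def cyclicEdgeConnectivity {V : Type} [Fintype V] (G : SimpleGraph V) : ℕ :=
  if ∃ A : Set V, ¬(G.induce A).IsAcyclic ∧ ¬(G.induce Aᶜ).IsAcyclic then
    sInf {n | ∃ A : Set V, ¬(G.induce A).IsAcyclic ∧ ¬(G.induce Aᶜ).IsAcyclic ∧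
      (cutEdges G A).ncard = n}
  else G.edgeSet.ncard - Fintype.card V + 1

/-!
Induction along the construction of Klee-graphs. Every Klee-graph other than `K₄` has pairwise
disjoint triangles, at least two of them, and if it has exactly two, `T` and `T'`, then for every
`w ∈ T'` exactly one edge of `T` lies on a 4-cycle avoiding `w`.

Let `H` arise from `G` by expanding `v` into a triangle `t₀t₁t₂`, where `tᵢ` takes over the edge
from `v` to `σᵢ`. The only possible 4-cycle of `H` through an edge `tᵢtⱼ` is `tᵢ tⱼ σⱼ σᵢ`, present
iff `{v, σᵢ, σⱼ}` is a triangle of `G`; a 4-cycle through an edge of `G - v` is either a 4-cycle of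
`G - v` or one of these. If `H` has exactly two triangles, then `G` has exactly two, `A ∋ v` and
`S ∌ v`, and those of `H` are `t₀t₁t₂` and `S`. So the edge of `t₀t₁t₂` over the edge of `A`
opposite `v` is the only one on a 4-cycle, and the edges of `S` on 4-cycles of `H` are those on
4-cycles of `G` avoiding `v`: exactly one, by induction. This bounds all 4-cycles of `H`, not
only those avoiding a vertex, which gives the theorem once `G ≠ K₄`, i.e. once `|H| ≥ 8`.
-/

variable {V W α : Type}

def IsQuad (G : SimpleGraph V) (a b c d : V) : Prop :=
  G.Adj a b ∧ G.Adj b c ∧ G.Adj c d ∧ G.Adj d a ∧ a ≠ c ∧ b ≠ d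

def IsQuadEdgeAvoiding (G : SimpleGraph V) (X : Set V) (a b : V) : Prop :=
  ∃ c d, IsQuad G a b c d ∧ a ∉ X ∧ b ∉ X ∧ c ∉ X ∧ d ∉ X

section Quad

variable {G : SimpleGraph V} {a b c d : V}

lemma IsQuad.rotate (h : IsQuad G a b c d) : IsQuad G b c d a := by
  obtain ⟨hab, hbc, hcd, hda, hac, hbd⟩ := h
  exact ⟨hbc, hcd, hda, hab, hbd, hac.symm⟩

lemma IsQuad.reverse (h : IsQuad G a b c d) : IsQuad G b a d c := by
  obtain ⟨hab, hbc, hcd, hda, hac, hbd⟩ := h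
  exact ⟨hab.symm, hda.symm, hcd.symm, hbc.symm, hbd, hac⟩

lemma IsQuad.exists_of_sym2_eq {x y : V} (h : IsQuad G a b c d) (he : s(x, y) = s(a, b)) :
    ∃ c' d', IsQuad G x y c' d' := by
  rcases Sym2.eq_iff.1 he with ⟨rfl, rfl⟩ | ⟨rfl, rfl⟩
  exacts [⟨c, d, h⟩, ⟨d, c, h.reverse⟩]

lemma isQuadEdgeAvoiding_empty_iff :
    IsQuadEdgeAvoiding G ∅ a b ↔ ∃ c d, IsQuad G a b c d := by
  simp [IsQuadEdgeAvoiding]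

lemma liesOnCycleOfLength_four_iff [DecidableEq V] :
    LiesOnCycleOfLength G s(a, b) 4 ↔ IsQuadEdgeAvoiding G ∅ a b := by
  rw [isQuadEdgeAvoiding_empty_iff]
  constructor
  · rintro ⟨x, w, hw, hlen, he⟩
    match w, hw, hlen, he with
    | .cons h₁ (.cons h₂ (.cons h₃ (.cons h₄ .nil))), hw, _, he =>
      have hq : IsQuad G _ _ _ _ := ⟨h₁, h₂, h₃, h₄, by simp_all [Walk.cons_isCycle_iff],
        by simp_all [Walk.cons_isCycle_iff]⟩
      simp only [Walk.edges_cons, Walk.edges_nil, List.mem_cons, List.not_mem_nil,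
        or_false] at he
      rcases he with he | he | he | he
      exacts [hq.exists_of_sym2_eq he, hq.rotate.exists_of_sym2_eq he,
        hq.rotate.rotate.exists_of_sym2_eq he, hq.rotate.rotate.rotate.exists_of_sym2_eq he]
  · rintro ⟨c, d, hab, hbc, hcd, hda, hac, hbd⟩
    refine ⟨a, .cons hab (.cons hbc (.cons hcd (.cons hda .nil))), ?_, rfl, by simp⟩
    have := hab.ne; have := hbc.ne; have := hcd.ne; have := hda.ne
    simp only [Walk.cons_isCycle_iff, Walk.isPath_def, Walk.support_cons, Walk.support_nil,
      Walk.edges_cons, Walk.edges_nil, List.nodup_cons, List.mem_cons, List.not_mem_nil,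
      Sym2.eq_iff]
    grind

end Quad

def HasUniqueQuadEdge (G : SimpleGraph V) (X T : Set V) : Prop :=
  ∃ x ∈ T, ∃ y ∈ T, IsQuadEdgeAvoiding G X x y ∧
    ∀ a ∈ T, ∀ b ∈ T, IsQuadEdgeAvoiding G X a b → s(a, b) = s(x, y)

section Unique

variable {G : SimpleGraph V} {X : Set V}

lemma HasUniqueQuadEdge.of_image {f : α → V} {s : Set α} {i j : α} (hi : i ∈ s) (hj : j ∈ s)
    (h : IsQuadEdgeAvoiding G X (f i) (f j))
    (huniq : ∀ k ∈ s, ∀ l ∈ s, IsQuadEdgeAvoiding G X (f k) (f l) → s(k, l) = s(i, j)) :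
    HasUniqueQuadEdge G X (f '' s) := by
  refine ⟨f i, ⟨i, hi, rfl⟩, f j, ⟨j, hj, rfl⟩, h, ?_⟩
  rintro _ ⟨k, hk, rfl⟩ _ ⟨l, hl, rfl⟩ hkl
  simpa using congrArg (Sym2.map f) (huniq k hk l hl hkl)

lemma HasUniqueQuadEdge.existsUnique [DecidableEq V] {T : Set V} (h : HasUniqueQuadEdge G ∅ T) :
    ∃! e : Sym2 V, (∃ x y : V, x ∈ T ∧ y ∈ T ∧ x ≠ y ∧ e = s(x, y)) ∧
      LiesOnCycleOfLength G e 4 := by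
  obtain ⟨x, hx, y, hy, hxy, huniq⟩ := h
  refine ⟨s(x, y), ⟨⟨x, y, hx, hy, ?_, rfl⟩, liesOnCycleOfLength_four_iff.2 hxy⟩, ?_⟩
  · obtain ⟨c, d, ⟨hadj, -⟩, -⟩ := hxy
    exact hadj.ne
  · rintro _ ⟨⟨a, b, ha, hb, -, rfl⟩, hab⟩
    exact huniq a ha b hb (liesOnCycleOfLength_four_iff.1 hab)

end Unique

lemma Fin3.eq_or_eq_or_eq_of_ne {i j k : Fin 3} (hij : i ≠ j) (hik : i ≠ k) (hjk : j ≠ k)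
    (m : Fin 3) : m = i ∨ m = j ∨ m = k := by
  omega

lemma Fin3.false_of_four_ne {i j k l : Fin 3} (hij : i ≠ j) (hik : i ≠ k) (hil : i ≠ l)
    (hjk : j ≠ k) (hjl : j ≠ l) (hkl : k ≠ l) : False := by
  omega

lemma Fin3.exists_ne_ne (m : Fin 3) : ∃ i j : Fin 3, i ≠ j ∧ i ≠ m ∧ j ≠ m := by
  revert m; decide

lemma Fin3.sym2_eq_of_ne {i j k l m : Fin 3} (hij : i ≠ j) (him : i ≠ m) (hjm : j ≠ m)
    (hkl : k ≠ l) (hkm : k ≠ m) (hlm : l ≠ m) : s(k, l) = s(i, j) := by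
  obtain ⟨rfl, rfl⟩ | ⟨rfl, rfl⟩ : (k = i ∧ l = j) ∨ (k = j ∧ l = i) := by omega
  exacts [rfl, Sym2.eq_swap]

lemma Set.pair_eq_of_mem_of_mem {β : Type} {x y a b : β} (ha : a ∈ ({x, y} : Set β))
    (hb : b ∈ ({x, y} : Set β)) (hab : a ≠ b) : ({x, y} : Set β) = {a, b} := by
  simp only [Set.mem_insert_iff, Set.mem_singleton_iff] at ha hb
  rcases ha with rfl | rfl <;> rcases hb with rfl | rfl
  exacts [absurd rfl hab, rfl, Set.pair_comm _ _, absurd rfl hab]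

lemma IsTriangleSet.exists_eq_insert_of_mem {G : SimpleGraph V} {T : Set V} {x : V}
    (hT : IsTriangleSet G T) (hx : x ∈ T) :
    ∃ y z, T = {x, y, z} ∧ G.Adj x y ∧ G.Adj x z ∧ G.Adj y z := by
  obtain ⟨a, b, c, rfl, hab, hac, hbc⟩ := hT
  simp only [Set.mem_insert_iff, Set.mem_singleton_iff] at hx
  rcases hx with rfl | rfl | rfl
  · exact ⟨b, c, rfl, hab, hac, hbc⟩
  · exact ⟨a, c, Set.insert_comm _ _ _, hab.symm, hbc, hac⟩
  · refine ⟨a, b, ?_, hac.symm, hbc.symm, hab⟩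
    ext
    simp only [Set.mem_insert_iff, Set.mem_singleton_iff]
    tauto

def triangleSets (G : SimpleGraph V) : Set (Set V) := {T | IsTriangleSet G T}

/-- In the prism, the expansion of `K₄`, every edge of each triangle lies on a 4-cycle; this is
why the last field only counts the 4-cycles avoiding a vertex `w` of the other triangle. -/
structure KleeInvariant (G : SimpleGraph V) : Prop where
  pairwiseDisjoint : (triangleSets G).PairwiseDisjoint id
  nontrivial : (triangleSets G).Nontrivial
  hasUniqueQuadEdge : ∀ T T', triangleSets G = {T, T'} → ∀ w ∈ T', HasUniqueQuadEdge G {w} T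

lemma KleeInvariant.exists_not_mem {G : SimpleGraph V} (hG : KleeInvariant G) (v : V) :
    ∃ S, IsTriangleSet G S ∧ v ∉ S := by
  obtain ⟨S₁, h₁, S₂, h₂, hne⟩ := hG.nontrivial
  by_cases hv : v ∈ S₁
  · exact ⟨S₂, h₂, Set.disjoint_left.1 (hG.pairwiseDisjoint h₁ h₂ hne) hv⟩
  · exact ⟨S₁, h₁, hv⟩

lemma KleeInvariant.triangleSets_eq_pair {G : SimpleGraph V} (hG : KleeInvariant G) {v : V}
    {S : Set V} (hS : IsTriangleSet G S) (huniq : ∀ S', IsTriangleSet G S' → v ∉ S' → S' = S) :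
    ∃ A, IsTriangleSet G A ∧ v ∈ A ∧ triangleSets G = {A, S} := by
  obtain ⟨A, hA, hvA⟩ : ∃ A, IsTriangleSet G A ∧ v ∈ A := by
    obtain ⟨S₁, h₁, S₂, h₂, hne⟩ := hG.nontrivial
    by_contra! h
    exact hne ((huniq _ h₁ (h _ h₁)).trans (huniq _ h₂ (h _ h₂)).symm)
  refine ⟨A, hA, hvA, Set.ext fun T => ⟨fun hT => ?_, ?_⟩⟩
  · by_cases hvT : v ∈ T
    · exact Or.inl (by_contra fun hTA =>
        Set.disjoint_left.1 (hG.pairwiseDisjoint hT hA hTA) hvT hvA)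
    · exact Or.inr (huniq T hT hvT)
  · rintro (rfl | rfl)
    exacts [hA, hS]

/-- `IsTriangleExpansion G H` unbundled at the expanded vertex `v`: `t` is the new triangle, `g`
embeds `G - v`, and `t i` takes over the edge from `v` to `σ i`. -/
structure ExpansionData (G : SimpleGraph V) (H : SimpleGraph W) (v : V) where
  t : Fin 3 → W
  g : {u : V // u ≠ v} → W
  σ : Fin 3 → {u : V // u ≠ v}
  t_injective : Function.Injective t
  g_injective : Function.Injective g
  t_ne_g : ∀ i a, t i ≠ g a
  t_or_g : ∀ w, (∃ i, t i = w) ∨ ∃ a, g a = w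
  σ_injective : Function.Injective σ
  adj_σ : ∀ i, G.Adj v (σ i)
  exists_σ_eq : ∀ a : {u : V // u ≠ v}, G.Adj v a → ∃ i, σ i = a
  adj_t_t : ∀ i j, H.Adj (t i) (t j) ↔ i ≠ j
  adj_g_g : ∀ a b, H.Adj (g a) (g b) ↔ G.Adj a b
  adj_t_g : ∀ i a, H.Adj (t i) (g a) ↔ a = σ i

lemma IsTriangleExpansion.exists_expansionData {G : SimpleGraph V} {H : SimpleGraph W}
    (h : IsTriangleExpansion G H) : ∃ v, Nonempty (ExpansionData G H v) := by
  obtain ⟨v, t, g, σ, ht, hg, hdisj, hcover, hσ, hadj, hσall, htt, hgg, htg⟩ := h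
  refine ⟨v, ⟨t, g, σ, ht, hg, fun i a hia => ?_, fun w => ?_, hσ, hadj, hσall, htt, hgg, htg⟩⟩
  · exact (Set.eq_empty_iff_forall_notMem.1 hdisj) (t i) ⟨⟨i, rfl⟩, a, hia.symm⟩
  · exact (hcover ▸ Set.mem_univ w : w ∈ Set.range t ∪ Set.range g)

namespace ExpansionData

variable {G : SimpleGraph V} {H : SimpleGraph W} {v : V} (D : ExpansionData G H v) {X : Set W}

lemma adj_g_t (a : {u : V // u ≠ v}) (i : Fin 3) : H.Adj (D.g a) (D.t i) ↔ a = D.σ i := by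
  rw [H.adj_comm, D.adj_t_g]

lemma nat_card (D : ExpansionData G H v) [Finite V] : Nat.card W = Nat.card V + 2 := by
  have hbij : Function.Bijective (Sum.elim D.t D.g) := by
    refine ⟨?_, fun w => ?_⟩
    · rintro (i | a) (j | b) h
      · exact congrArg _ (D.t_injective h)
      · exact absurd h (D.t_ne_g i b)
      · exact absurd h.symm (D.t_ne_g j a)
      · exact congrArg _ (D.g_injective h)
    · rcases D.t_or_g w with ⟨i, rfl⟩ | ⟨a, rfl⟩
      exacts [⟨.inl i, rfl⟩, ⟨.inr a, rfl⟩]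
  have hv : Nat.card {u : V // u ≠ v} + 1 = Nat.card V := by
    rw [← Finite.card_option, Nat.card_congr (Equiv.optionSubtypeNe v)]
  rw [← Nat.card_eq_of_bijective _ hbij, Nat.card_sum, Nat.card_eq_fintype_card,
    Fintype.card_fin]
  omega

def lift (S : Set V) : Set W := D.g '' (Subtype.val ⁻¹' S)

lemma lift_triple (p q r : {u : V // u ≠ v}) :
    D.lift {p.1, q.1, r.1} = {D.g p, D.g q, D.g r} := by
  have : Subtype.val ⁻¹' {p.1, q.1, r.1} = ({p, q, r} : Set {u : V // u ≠ v}) := by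
    ext; simp [Subtype.ext_iff]
  rw [lift, this, Set.image_insert_eq, Set.image_insert_eq, Set.image_singleton]

lemma range_t_eq {i j k : Fin 3} (hij : i ≠ j) (hik : i ≠ k) (hjk : j ≠ k) :
    Set.range D.t = {D.t i, D.t j, D.t k} := by
  ext w
  constructor
  · rintro ⟨m, rfl⟩
    rcases Fin3.eq_or_eq_or_eq_of_ne hij hik hjk m with rfl | rfl | rfl <;> simp
  · simp only [Set.mem_insert_iff, Set.mem_singleton_iff]
    rintro (rfl | rfl | rfl) <;> exact ⟨_, rfl⟩

lemma isTriangleSet_range_t : IsTriangleSet H (Set.range D.t) := by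
  rw [D.range_t_eq (i := 0) (j := 1) (k := 2) (by decide) (by decide) (by decide)]
  exact ⟨_, _, _, rfl, (D.adj_t_t _ _).2 (by decide), (D.adj_t_t _ _).2 (by decide),
    (D.adj_t_t _ _).2 (by decide)⟩

lemma isTriangleSet_lift {S : Set V} (hS : IsTriangleSet G S) (hv : v ∉ S) :
    IsTriangleSet H (D.lift S) := by
  obtain ⟨a, b, c, rfl, hab, hac, hbc⟩ := hS
  simp only [Set.mem_insert_iff, Set.mem_singleton_iff, not_or] at hv
  obtain ⟨hva, hvb, hvc⟩ := hv
  rw [D.lift_triple ⟨a, Ne.symm hva⟩ ⟨b, Ne.symm hvb⟩ ⟨c, Ne.symm hvc⟩]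
  exact ⟨_, _, _, rfl, (D.adj_g_g _ _).2 hab, (D.adj_g_g _ _).2 hac, (D.adj_g_g _ _).2 hbc⟩

lemma lift_inj {S S' : Set V} (hS : v ∉ S) (hS' : v ∉ S') (h : D.lift S = D.lift S') :
    S = S' := by
  have h' := Set.image_injective.2 D.g_injective h
  ext x
  by_cases hx : x = v
  · subst hx; simp [hS, hS']
  · exact Set.ext_iff.1 h' ⟨x, hx⟩

lemma disjoint_range_t_lift (S : Set V) : Disjoint (Set.range D.t) (D.lift S) := by
  rw [Set.disjoint_left]
  rintro _ ⟨i, rfl⟩ ⟨a, -, ha⟩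
  exact D.t_ne_g i a ha.symm

lemma eq_range_t_of_mem {T : Set W} {i : Fin 3} (hT : IsTriangleSet H T) (hi : D.t i ∈ T) :
    T = Set.range D.t := by
  obtain ⟨y, z, rfl, hy, hz, hyz⟩ := hT.exists_eq_insert_of_mem hi
  rcases D.t_or_g y with ⟨j, rfl⟩ | ⟨a, rfl⟩ <;> rcases D.t_or_g z with ⟨k, rfl⟩ | ⟨b, rfl⟩
  · exact (D.range_t_eq ((D.adj_t_t _ _).1 hy) ((D.adj_t_t _ _).1 hz)
      ((D.adj_t_t _ _).1 hyz)).symm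
  · exact absurd (D.σ_injective (((D.adj_t_g _ _).1 hz).symm.trans ((D.adj_t_g _ _).1 hyz)))
      ((D.adj_t_t _ _).1 hy)
  · exact absurd (D.σ_injective (((D.adj_t_g _ _).1 hy).symm.trans ((D.adj_g_t _ _).1 hyz)))
      ((D.adj_t_t _ _).1 hz)
  · rw [(D.adj_t_g _ _).1 hy, (D.adj_t_g _ _).1 hz] at hyz
    exact absurd hyz (H.loopless.irrefl _)

lemma exists_eq_lift {T : Set W} (hT : IsTriangleSet H T) (ht : ∀ i, D.t i ∉ T) :
    ∃ S, IsTriangleSet G S ∧ v ∉ S ∧ T = D.lift S := by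
  obtain ⟨a, b, c, rfl, hab, hac, hbc⟩ := hT
  have hg : ∀ w ∈ ({a, b, c} : Set W), ∃ p, D.g p = w := fun w hw =>
    (D.t_or_g w).resolve_left fun ⟨i, hi⟩ => ht i (hi ▸ hw)
  obtain ⟨p, rfl⟩ := hg a (by simp)
  obtain ⟨q, rfl⟩ := hg b (by simp)
  obtain ⟨r, rfl⟩ := hg c (by simp)
  refine ⟨{p.1, q.1, r.1}, ⟨_, _, _, rfl, (D.adj_g_g _ _).1 hab, (D.adj_g_g _ _).1 hac,
    (D.adj_g_g _ _).1 hbc⟩, ?_, (D.lift_triple p q r).symm⟩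
  simp only [Set.mem_insert_iff, Set.mem_singleton_iff, not_or]
  exact ⟨p.2.symm, q.2.symm, r.2.symm⟩

lemma triangleSets_eq : triangleSets H =
    insert (Set.range D.t) (D.lift '' {S | IsTriangleSet G S ∧ v ∉ S}) := by
  ext T
  constructor
  · intro hT
    by_cases ht : ∃ i, D.t i ∈ T
    · obtain ⟨i, hi⟩ := ht
      exact Or.inl (D.eq_range_t_of_mem hT hi)
    · obtain ⟨S, hS, hv, rfl⟩ := D.exists_eq_lift hT (not_exists.1 ht)
      exact Or.inr ⟨S, ⟨hS, hv⟩, rfl⟩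
  · rintro (rfl | ⟨S, ⟨hS, hv⟩, rfl⟩)
    exacts [D.isTriangleSet_range_t, D.isTriangleSet_lift hS hv]

lemma g_mem_lift_iff {p : {u : V // u ≠ v}} {S : Set V} : D.g p ∈ D.lift S ↔ (p : V) ∈ S :=
  D.g_injective.mem_set_image

lemma range_t_ne_lift (S : Set V) : Set.range D.t ≠ D.lift S := fun h =>
  Set.disjoint_left.1 (D.disjoint_range_t_lift S) ⟨0, rfl⟩ (h ▸ ⟨0, rfl⟩)

lemma pairwiseDisjoint_triangleSets (D : ExpansionData G H v)
    (hG : {S | IsTriangleSet G S ∧ v ∉ S}.PairwiseDisjoint id) :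
    (triangleSets H).PairwiseDisjoint id := by
  rw [D.triangleSets_eq]
  refine Set.PairwiseDisjoint.insert ?_ ?_
  · rintro _ ⟨S, hS, rfl⟩ _ ⟨S', hS', rfl⟩ hne
    have hSS' : S ≠ S' := fun h => hne (h ▸ rfl)
    exact (Set.disjoint_image_iff D.g_injective).2 ((hG hS hS' hSS').preimage _)
  · rintro _ ⟨S, -, rfl⟩ -
    exact D.disjoint_range_t_lift S

lemma nontrivial_triangleSets (D : ExpansionData G H v) {S : Set V} (hS : IsTriangleSet G S)
    (hv : v ∉ S) :
    (triangleSets H).Nontrivial :=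
  ⟨_, D.isTriangleSet_range_t, _, D.isTriangleSet_lift hS hv, D.range_t_ne_lift S⟩

lemma pair_eq_of_triangleSets_eq {T T' : Set W} (h : triangleSets H = {T, T'}) {S : Set V}
    (hS : IsTriangleSet G S) (hv : v ∉ S) :
    ({T, T'} : Set (Set W)) = {Set.range D.t, D.lift S} := by
  have hmem : ∀ {T₀}, IsTriangleSet H T₀ → T₀ ∈ ({T, T'} : Set (Set W)) := fun h₀ => h ▸ h₀
  exact Set.pair_eq_of_mem_of_mem (hmem D.isTriangleSet_range_t)
    (hmem (D.isTriangleSet_lift hS hv)) (D.range_t_ne_lift S)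

lemma exists_eq_insert_σ {A : Set V} (hA : IsTriangleSet G A) (hv : v ∈ A) :
    ∃ i j, i ≠ j ∧ G.Adj (D.σ i) (D.σ j) ∧ A = {v, (D.σ i : V), (D.σ j : V)} := by
  obtain ⟨y, z, rfl, hy, hz, hyz⟩ := hA.exists_eq_insert_of_mem hv
  obtain ⟨i, hi⟩ := D.exists_σ_eq ⟨y, hy.ne'⟩ hy
  obtain ⟨j, hj⟩ := D.exists_σ_eq ⟨z, hz.ne'⟩ hz
  obtain rfl : (D.σ i : V) = y := congrArg Subtype.val hi
  obtain rfl : (D.σ j : V) = z := congrArg Subtype.val hj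
  exact ⟨i, j, fun h => hyz.ne (h ▸ rfl), hyz, rfl⟩

lemma isTriangleSet_insert_σ {i j : Fin 3} (h : G.Adj (D.σ i) (D.σ j)) :
    IsTriangleSet G {v, (D.σ i : V), (D.σ j : V)} :=
  ⟨v, _, _, rfl, D.adj_σ i, D.adj_σ j, h⟩

lemma isQuadEdgeAvoiding_t_t_iff {a b : Fin 3} :
    IsQuadEdgeAvoiding H X (D.t a) (D.t b) ↔ a ≠ b ∧ G.Adj (D.σ a) (D.σ b) ∧
      D.t a ∉ X ∧ D.t b ∉ X ∧ D.g (D.σ a) ∉ X ∧ D.g (D.σ b) ∉ X := by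
  constructor
  · rintro ⟨c, d, ⟨hab, hbc, hcd, hda, hac, hbd⟩, ha, hb, hc, hd⟩
    rcases D.t_or_g c with ⟨k, rfl⟩ | ⟨r, rfl⟩ <;> rcases D.t_or_g d with ⟨m, rfl⟩ | ⟨s, rfl⟩
    · exact (Fin3.false_of_four_ne ((D.adj_t_t _ _).1 hab) (fun h => hac (congrArg D.t h))
        ((D.adj_t_t _ _).1 hda).symm ((D.adj_t_t _ _).1 hbc) (fun h => hbd (congrArg D.t h))
        ((D.adj_t_t _ _).1 hcd)).elim
    · have hka := D.σ_injective (((D.adj_t_g _ _).1 hcd).symm.trans ((D.adj_g_t _ _).1 hda))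
      exact absurd (congrArg D.t hka.symm) hac
    · have hbm := D.σ_injective (((D.adj_t_g _ _).1 hbc).symm.trans ((D.adj_g_t _ _).1 hcd))
      exact absurd (congrArg D.t hbm) hbd
    · obtain rfl := (D.adj_t_g _ _).1 hbc
      obtain rfl := (D.adj_g_t _ _).1 hda
      exact ⟨(D.adj_t_t _ _).1 hab, ((D.adj_g_g _ _).1 hcd).symm, ha, hb, hd, hc⟩
  · rintro ⟨hab, hadj, ha, hb, hga, hgb⟩
    exact ⟨D.g (D.σ b), D.g (D.σ a), ⟨(D.adj_t_t _ _).2 hab, (D.adj_t_g _ _).2 rfl,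
      (D.adj_g_g _ _).2 hadj.symm, (D.adj_g_t _ _).2 rfl, D.t_ne_g _ _, D.t_ne_g _ _⟩,
      ha, hb, hgb, hga⟩

lemma isQuadEdgeAvoiding_g_g_iff {p q : {u : V // u ≠ v}} :
    IsQuadEdgeAvoiding H X (D.g p) (D.g q) ↔
      (∃ c d : {u : V // u ≠ v}, IsQuad G p q c d ∧
        D.g p ∉ X ∧ D.g q ∉ X ∧ D.g c ∉ X ∧ D.g d ∉ X) ∨
      (∃ i j, D.σ i = p ∧ D.σ j = q ∧ G.Adj p q ∧
        D.g p ∉ X ∧ D.g q ∉ X ∧ D.t i ∉ X ∧ D.t j ∉ X) := by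
  constructor
  · rintro ⟨c, d, ⟨hpq, hqc, hcd, hdp, hpc, hqd⟩, hp, hq, hc, hd⟩
    rcases D.t_or_g c with ⟨k, rfl⟩ | ⟨r, rfl⟩ <;> rcases D.t_or_g d with ⟨m, rfl⟩ | ⟨s, rfl⟩
    · exact Or.inr ⟨m, k, ((D.adj_t_g _ _).1 hdp).symm, ((D.adj_g_t _ _).1 hqc).symm,
        (D.adj_g_g _ _).1 hpq, hp, hq, hd, hc⟩
    · have hsq := ((D.adj_t_g _ _).1 hcd).trans ((D.adj_g_t _ _).1 hqc).symm
      exact absurd (congrArg D.g hsq.symm) hqd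
    · have hrp := ((D.adj_g_t _ _).1 hcd).trans ((D.adj_t_g _ _).1 hdp).symm
      exact absurd (congrArg D.g hrp.symm) hpc
    · have hne : ∀ {x y : {u : V // u ≠ v}}, D.g x ≠ D.g y → x.1 ≠ y.1 :=
        fun h h' => h (congrArg D.g (Subtype.ext h'))
      exact Or.inl ⟨r, s, ⟨(D.adj_g_g _ _).1 hpq, (D.adj_g_g _ _).1 hqc, (D.adj_g_g _ _).1 hcd,
        (D.adj_g_g _ _).1 hdp, hne hpc, hne hqd⟩, hp, hq, hc, hd⟩
  · rintro (⟨c, d, ⟨hpq, hqc, hcd, hdp, hpc, hqd⟩, hp, hq, hc, hd⟩ |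
      ⟨i, j, rfl, rfl, hij, hp, hq, hi, hj⟩)
    · have hne : ∀ {x y : {u : V // u ≠ v}}, x.1 ≠ y.1 → D.g x ≠ D.g y :=
        fun h h' => h (congrArg Subtype.val (D.g_injective h'))
      exact ⟨D.g c, D.g d, ⟨(D.adj_g_g _ _).2 hpq, (D.adj_g_g _ _).2 hqc, (D.adj_g_g _ _).2 hcd,
        (D.adj_g_g _ _).2 hdp, hne hpc, hne hqd⟩, hp, hq, hc, hd⟩
    · have hji : j ≠ i := fun h => hij.ne (by rw [h])
      exact ⟨D.t j, D.t i, ⟨(D.adj_g_g _ _).2 hij, (D.adj_g_t _ _).2 rfl, (D.adj_t_t _ _).2 hji,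
        (D.adj_t_g _ _).2 rfl, (D.t_ne_g _ _).symm, (D.t_ne_g _ _).symm⟩, hp, hq, hj, hi⟩

lemma sym2_eq_of_insert_σ_eq {i j k l : Fin 3} (hkl : k ≠ l)
    (h : ({v, (D.σ k : V), (D.σ l : V)} : Set V) = {v, (D.σ i : V), (D.σ j : V)}) :
    s(k, l) = s(i, j) := by
  have hmem : ∀ m, (D.σ m : V) ∈ ({v, (D.σ k : V), (D.σ l : V)} : Set V) → m = i ∨ m = j := by
    intro m hm
    rw [h] at hm
    simp only [Set.mem_insert_iff, Set.mem_singleton_iff] at hm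
    rcases hm with hm | hm | hm
    · exact absurd hm (D.σ m).2
    · exact Or.inl (D.σ_injective (Subtype.ext hm))
    · exact Or.inr (D.σ_injective (Subtype.ext hm))
  rcases hmem k (by simp) with rfl | rfl <;> rcases hmem l (by simp) with rfl | rfl
  exacts [absurd rfl hkl, rfl, Sym2.eq_swap, absurd rfl hkl]

lemma hasUniqueQuadEdge_range_t {S : Set V} {i j : Fin 3} (hij : i ≠ j)
    (hadj : G.Adj (D.σ i) (D.σ j))
    (huniq : ∀ k l, k ≠ l → G.Adj (D.σ k) (D.σ l) → s(k, l) = s(i, j))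
    (hi : (D.σ i : V) ∉ S) (hj : (D.σ j : V) ∉ S) (hX : X ⊆ D.lift S) :
    HasUniqueQuadEdge H X (Set.range D.t) := by
  have hXt : ∀ k, D.t k ∉ X := fun k hk =>
    Set.disjoint_left.1 (D.disjoint_range_t_lift S) ⟨k, rfl⟩ (hX hk)
  rw [← Set.image_univ]
  refine HasUniqueQuadEdge.of_image (Set.mem_univ i) (Set.mem_univ j) ?_ ?_
  · exact D.isQuadEdgeAvoiding_t_t_iff.2 ⟨hij, hadj, hXt i, hXt j,
      fun h => hi (D.g_mem_lift_iff.1 (hX h)), fun h => hj (D.g_mem_lift_iff.1 (hX h))⟩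
  · rintro k - l - hkl
    obtain ⟨hkl, hadj', -⟩ := D.isQuadEdgeAvoiding_t_t_iff.1 hkl
    exact huniq k l hkl hadj'

lemma hasUniqueQuadEdge_lift {S : Set V} (hS : HasUniqueQuadEdge G {v} S)
    (hσ : ∀ i j, G.Adj (D.σ i) (D.σ j) → (D.σ i : V) ∉ S) (hX : X ⊆ Set.range D.t) :
    HasUniqueQuadEdge H X (D.lift S) := by
  obtain ⟨x, hx, y, hy, ⟨c, d, hq, hxv, hyv, hcv, hdv⟩, huniq⟩ := hS
  have hXg : ∀ p, D.g p ∉ X := fun p hp => by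
    obtain ⟨i, hi⟩ := hX hp
    exact D.t_ne_g i p hi
  refine HasUniqueQuadEdge.of_image (f := D.g) (i := ⟨x, hxv⟩) (j := ⟨y, hyv⟩) hx hy ?_ ?_
  · exact D.isQuadEdgeAvoiding_g_g_iff.2
      (Or.inl ⟨⟨c, hcv⟩, ⟨d, hdv⟩, hq, hXg _, hXg _, hXg _, hXg _⟩)
  · rintro k hk l hl hkl
    rcases D.isQuadEdgeAvoiding_g_g_iff.1 hkl with ⟨c', d', hq', -⟩ | ⟨i, j, rfl, rfl, hadj, -⟩
    · exact Sym2.map.injective Subtype.val_injective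
        (by simpa using huniq k hk l hl ⟨c', d', hq', k.2, l.2, c'.2, d'.2⟩)
    · exact absurd hk (hσ i j hadj)

lemma hasUniqueQuadEdge_of_kleeInvariant (D : ExpansionData G H v) (hG : KleeInvariant G)
    {T T' : Set W} (hH : triangleSets H = {T, T'}) (hX : X ⊆ T') : HasUniqueQuadEdge H X T := by
  obtain ⟨S, hS, hvS⟩ := hG.exists_not_mem v
  have hpair := D.pair_eq_of_triangleSets_eq hH hS hvS
  have huniqS : ∀ S', IsTriangleSet G S' → v ∉ S' → S' = S := fun S' hS' hv' => by
    have hmem : D.lift S' ∈ ({T, T'} : Set (Set W)) := hH ▸ D.isTriangleSet_lift hS' hv'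
    rw [hpair] at hmem
    exact D.lift_inj hv' hvS (hmem.resolve_left (D.range_t_ne_lift S').symm)
  obtain ⟨A, hA, hvA, hGAS⟩ := hG.triangleSets_eq_pair hS huniqS
  have hAS : Disjoint A S := hG.pairwiseDisjoint hA hS fun h => hvS (h ▸ hvA)
  obtain ⟨i, j, hij, hadj, rfl⟩ := D.exists_eq_insert_σ hA hvA
  have hvσ : ∀ k l, G.Adj (D.σ k) (D.σ l) →
      ({v, (D.σ k : V), (D.σ l : V)} : Set V) = {v, (D.σ i : V), (D.σ j : V)} := by
    intro k l h
    have hmem : _ ∈ triangleSets G := D.isTriangleSet_insert_σ h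
    rw [hGAS] at hmem
    exact hmem.resolve_right fun h' => hvS (h' ▸ Set.mem_insert v _)
  have hσS : ∀ k l, G.Adj (D.σ k) (D.σ l) → (D.σ k : V) ∉ S := fun k l h =>
    Set.disjoint_left.1 hAS (hvσ k l h ▸ by simp)
  rcases Set.pair_eq_pair_iff.1 hpair with ⟨rfl, rfl⟩ | ⟨rfl, rfl⟩
  · exact D.hasUniqueQuadEdge_range_t hij hadj
      (fun k l hkl h => D.sym2_eq_of_insert_σ_eq hkl (hvσ k l h))
      (hσS i j hadj) (hσS j i hadj.symm) hX
  · exact D.hasUniqueQuadEdge_lift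
      (hG.hasUniqueQuadEdge _ _ (hGAS.trans (Set.pair_comm _ _)) v hvA) hσS hX

theorem kleeInvariant (D : ExpansionData G H v) (hG : KleeInvariant G) : KleeInvariant H := by
  obtain ⟨S, hS, hvS⟩ := hG.exists_not_mem v
  exact ⟨D.pairwiseDisjoint_triangleSets (hG.pairwiseDisjoint.subset fun _ h => h.1),
    D.nontrivial_triangleSets hS hvS, fun T T' hH w hw =>
    D.hasUniqueQuadEdge_of_kleeInvariant hG hH (Set.singleton_subset_iff.2 hw)⟩

lemma false_of_four_ne (hσ : Function.Surjective D.σ) {a b c d : {u : V // u ≠ v}}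
    (hab : (a : V) ≠ b) (hac : (a : V) ≠ c) (had : (a : V) ≠ d) (hbc : (b : V) ≠ c)
    (hbd : (b : V) ≠ d) (hcd : (c : V) ≠ d) : False := by
  obtain ⟨i, rfl⟩ := hσ a
  obtain ⟨j, rfl⟩ := hσ b
  obtain ⟨k, rfl⟩ := hσ c
  obtain ⟨l, rfl⟩ := hσ d
  have hne : ∀ {x y : Fin 3}, (D.σ x : V) ≠ D.σ y → x ≠ y := fun h h' => h (by rw [h'])
  exact Fin3.false_of_four_ne (hne hab) (hne hac) (hne had) (hne hbc) (hne hbd) (hne hcd)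

lemma eq_setOf_ne_of_surjective (hσ : Function.Surjective D.σ) {S : Set V}
    (hS : IsTriangleSet G S) (hv : v ∉ S) : S = {u | u ≠ v} := by
  obtain ⟨a, b, c, rfl, hab, hac, hbc⟩ := hS
  ext u
  refine ⟨fun hu h => hv (h ▸ hu), fun hu => by_contra fun hu' => ?_⟩
  simp only [Set.mem_insert_iff, Set.mem_singleton_iff, not_or] at hv hu'
  obtain ⟨hva, hvb, hvc⟩ := hv
  exact D.false_of_four_ne hσ (a := ⟨a, Ne.symm hva⟩) (b := ⟨b, Ne.symm hvb⟩)
    (c := ⟨c, Ne.symm hvc⟩) (d := ⟨u, hu⟩) hab.ne hac.ne (Ne.symm hu'.1) hbc.ne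
    (Ne.symm hu'.2.1) (Ne.symm hu'.2.2)

lemma σ_surjective_of_complete (hK : ∀ a b : V, G.Adj a b ↔ a ≠ b) : Function.Surjective D.σ :=
  fun p => D.exists_σ_eq p ((hK _ _).2 (Ne.symm p.2))

lemma adj_σ_σ_of_complete (hK : ∀ a b : V, G.Adj a b ↔ a ≠ b) {i j : Fin 3} (hij : i ≠ j) :
    G.Adj (D.σ i) (D.σ j) :=
  (hK _ _).2 fun h => hij (D.σ_injective (Subtype.ext h))

lemma hasUniqueQuadEdge_range_t_of_complete (hK : ∀ a b : V, G.Adj a b ↔ a ≠ b) (m : Fin 3) :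
    HasUniqueQuadEdge H {D.g (D.σ m)} (Set.range D.t) := by
  obtain ⟨i, j, hij, him, hjm⟩ := Fin3.exists_ne_ne m
  have hne : ∀ {k}, k ≠ m → D.g (D.σ k) ∉ ({D.g (D.σ m)} : Set W) :=
    fun hkm h => hkm (D.σ_injective (D.g_injective h))
  rw [← Set.image_univ]
  refine HasUniqueQuadEdge.of_image (Set.mem_univ i) (Set.mem_univ j) ?_ ?_
  · exact D.isQuadEdgeAvoiding_t_t_iff.2 ⟨hij, D.adj_σ_σ_of_complete hK hij, D.t_ne_g _ _,
      D.t_ne_g _ _, hne him, hne hjm⟩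
  · rintro k - l - hkl
    obtain ⟨hkl, -, -, -, hk, hl⟩ := D.isQuadEdgeAvoiding_t_t_iff.1 hkl
    exact Fin3.sym2_eq_of_ne hij him hjm hkl (fun h => hk (h ▸ rfl)) (fun h => hl (h ▸ rfl))

lemma hasUniqueQuadEdge_lift_of_complete (hK : ∀ a b : V, G.Adj a b ↔ a ≠ b) (m : Fin 3) :
    HasUniqueQuadEdge H {D.t m} (D.lift {u | u ≠ v}) := by
  obtain ⟨i, j, hij, him, hjm⟩ := Fin3.exists_ne_ne m
  have hne : ∀ {k}, k ≠ m → D.t k ∉ ({D.t m} : Set W) := fun hkm h => hkm (D.t_injective h)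
  have hg : ∀ p, D.g p ∉ ({D.t m} : Set W) := fun p h => D.t_ne_g m p h.symm
  refine HasUniqueQuadEdge.of_image (f := D.g) (D.σ i).2 (D.σ j).2 ?_ ?_
  · exact D.isQuadEdgeAvoiding_g_g_iff.2 (Or.inr ⟨i, j, rfl, rfl,
      D.adj_σ_σ_of_complete hK hij, hg _, hg _, hne him, hne hjm⟩)
  · rintro k - l - hkl
    rcases D.isQuadEdgeAvoiding_g_g_iff.1 hkl with
      ⟨c, d, ⟨hkl, hlc, hcd, hdk, hkc, hld⟩, -⟩ | ⟨k, l, rfl, rfl, hadj, -, -, hk, hl⟩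
    · exact (D.false_of_four_ne (D.σ_surjective_of_complete hK) hkl.ne hkc hdk.ne' hlc.ne hld
        hcd.ne).elim
    · have hkl : k ≠ l := fun h => hadj.ne (h ▸ rfl)
      simpa using congrArg (Sym2.map D.σ) (Fin3.sym2_eq_of_ne hij him hjm hkl
        (fun h => hk (h ▸ rfl)) (fun h => hl (h ▸ rfl)))

theorem kleeInvariant_of_complete (D : ExpansionData G H v)
    (hK : ∀ a b : V, G.Adj a b ↔ a ≠ b) : KleeInvariant H := by
  have hσ := D.σ_surjective_of_complete hK
  have hS₀ : IsTriangleSet G {u | u ≠ v} := by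
    have hT : IsTriangleSet G {(D.σ 0 : V), (D.σ 1 : V), (D.σ 2 : V)} :=
      ⟨_, _, _, rfl, D.adj_σ_σ_of_complete hK (by decide),
        D.adj_σ_σ_of_complete hK (by decide), D.adj_σ_σ_of_complete hK (by decide)⟩
    have hv : v ∉ ({(D.σ 0 : V), (D.σ 1 : V), (D.σ 2 : V)} : Set V) := by
      simp only [Set.mem_insert_iff, Set.mem_singleton_iff, not_or]
      exact ⟨(D.σ 0).2.symm, (D.σ 1).2.symm, (D.σ 2).2.symm⟩
    rwa [D.eq_setOf_ne_of_surjective hσ hT hv] at hT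
  have hv₀ : v ∉ {u | u ≠ v} := fun h => h rfl
  refine ⟨D.pairwiseDisjoint_triangleSets ?_, D.nontrivial_triangleSets hS₀ hv₀,
    fun T T' hH w hw => ?_⟩
  · refine Set.Subsingleton.pairwise (fun S hS S' hS' => ?_) _
    rw [D.eq_setOf_ne_of_surjective hσ hS.1 hS.2, D.eq_setOf_ne_of_surjective hσ hS'.1 hS'.2]
  rcases Set.pair_eq_pair_iff.1 (D.pair_eq_of_triangleSets_eq hH hS₀ hv₀) with
    ⟨rfl, rfl⟩ | ⟨rfl, rfl⟩
  · obtain ⟨p, -, rfl⟩ := hw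
    obtain ⟨m, rfl⟩ := hσ p
    exact D.hasUniqueQuadEdge_range_t_of_complete hK m
  · obtain ⟨m, rfl⟩ := hw
    exact D.hasUniqueQuadEdge_lift_of_complete hK m

end ExpansionData

theorem IsKlee.complete_or_kleeInvariant {G : SimpleGraph V} (hG : IsKlee G) :
    (Nonempty (V ≃ Fin 4) ∧ ∀ a b, G.Adj a b ↔ a ≠ b) ∨ KleeInvariant G := by
  induction hG with
  | base G e h => exact Or.inl ⟨⟨e⟩, h⟩
  | expand G H _ hexp ih =>
    obtain ⟨v, ⟨D⟩⟩ := hexp.exists_expansionData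
    exact Or.inr (ih.elim (fun hK => D.kleeInvariant_of_complete hK.2) D.kleeInvariant)

theorem klee_two_triangles_four_cycle_general {V : Type} [Fintype V] [DecidableEq V]
    (G : SimpleGraph V) (hG : IsKlee G) (h8 : 8 ≤ Fintype.card V)
    (T1 T2 : Set V) (hT1 : IsTriangleSet G T1) (hT2 : IsTriangleSet G T2)
    (honly : ∀ T : Set V, IsTriangleSet G T → T = T1 ∨ T = T2) :
    ∀ T ∈ ({T1, T2} : Set (Set V)),
      ∃! e : Sym2 V, (∃ x y : V, x ∈ T ∧ y ∈ T ∧ x ≠ y ∧ e = s(x, y)) ∧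
        LiesOnCycleOfLength G e 4 := by
  have hGT : triangleSets G = {T1, T2} :=
    Set.ext fun T => ⟨honly T, by rintro (rfl | rfl); exacts [hT1, hT2]⟩
  cases hG with
  | base _ e _ =>
    have hcard := Fintype.card_congr e
    simp only [Fintype.card_fin] at hcard
    omega
  | expand G₀ _ hG₀ hexp =>
    obtain ⟨v, ⟨D⟩⟩ := hexp.exists_expansionData
    rcases hG₀.complete_or_kleeInvariant with ⟨⟨e⟩, -⟩ | hinv
    · have : Finite _ := .of_equiv _ e.symm
      have hcard := D.nat_card
      rw [Nat.card_eq_fintype_card, Nat.card_congr e, Nat.card_eq_fintype_card,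
        Fintype.card_fin] at hcard
      omega
    · rintro T (rfl | rfl)
      · exact (D.hasUniqueQuadEdge_of_kleeInvariant hinv hGT (Set.empty_subset _)).existsUnique
      · exact (D.hasUniqueQuadEdge_of_kleeInvariant hinv (hGT.trans (Set.pair_comm _ _))
          (Set.empty_subset _)).existsUnique

theorem klee_two_triangles_four_cycle {V : Type} [Fintype V] [DecidableEq V]
    (G : SimpleGraph V) (hG : IsKlee G) (h8 : 8 ≤ Fintype.card V)
    (T1 T2 : Set V) (hT1 : IsTriangleSet G T1) (hT2 : IsTriangleSet G T2) (hne : T1 ≠ T2)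
    (honly : ∀ T : Set V, IsTriangleSet G T → T = T1 ∨ T = T2) :
    ∀ T ∈ ({T1, T2} : Set (Set V)),
      ∃! e : Sym2 V, (∃ x y : V, x ∈ T ∧ y ∈ T ∧ x ≠ y ∧ e = s(x, y)) ∧
        LiesOnCycleOfLength G e 4 :=
  klee_two_triangles_four_cycle_general G hG h8 T1 T2 hT1 hT2 honly
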